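/- Let A be a Banach algebra, B a right Banach A-module with action π_r : B × A → B, and suppose e'' ∈ A** is a right unit for the first Arens product on A** which is the weak* limit of a bounded approximate identity (e_α) of A. Then B = BA (every b ∈ B can be written as b = π_r(x,a) with x ∈ B, a ∈ A) if and only if e'' is a right unit A**-module for B**, i.e. π_r***(b'', e'') = b'' for every b'' ∈ B**. -/

import Mathlib

open Filter Topology ContinuousLinearMap NormedSpace

noncomputable section

variable {X Y Z W E F : Type*}
  [NormedAddCommGroup X] [NormedSpace ℂ X]
  [NormedAddCommGroup Y] [NormedSpace ℂ Y]
  [NormedAddCommGroup Z] [NormedSpace ℂ Z]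
  [NormedAddCommGroup E] [NormedSpace ℂ E]
  [NormedAddCommGroup F] [NormedSpace ℂ F]

/-- Port shim: shortcut instances so that nested instance search finds the structure of
`StrongDual ℂ (StrongDual ℂ E)` (formerly `NormedSpace.Dual`); it is `inferInstance`. -/
instance instNACGStrongDualC {E : Type*} [NormedAddCommGroup E] [NormedSpace ℂ E] :
    NormedAddCommGroup (StrongDual ℂ E) := inferInstance

instance instNSStrongDualC {E : Type*} [NormedAddCommGroup E] [NormedSpace ℂ E] :
    NormedSpace ℂ (StrongDual ℂ E) := inferInstance

/-- The (first) Arens adjoint `m* : Z* × X → Y*` of a bounded bilinear map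
`m : X × Y → Z`, characterized by `⟨m*(z',x), y⟩ = ⟨z', m(x,y)⟩`. -/
noncomputable def arensAdj (m : X →L[ℂ] Y →L[ℂ] Z) :
    StrongDual ℂ Z →L[ℂ] X →L[ℂ] StrongDual ℂ Y :=
  ((ContinuousLinearMap.compL ℂ Y Z ℂ).flip.comp m).flip

/-- The Arens triple adjoint `m*** : X** × Y** → Z**`. -/
noncomputable def arensExt (m : X →L[ℂ] Y →L[ℂ] Z) :
    StrongDual ℂ (StrongDual ℂ X) →L[ℂ] StrongDual ℂ (StrongDual ℂ Y) →L[ℂ] StrongDual ℂ (StrongDual ℂ Z) :=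
  arensAdj (arensAdj (arensAdj m))

/-- A map between dual spaces is weak*-weak* continuous. -/
def IsWeakStarCont (f : StrongDual ℂ E → StrongDual ℂ F) : Prop :=
  Continuous fun x : WeakDual ℂ E =>
    StrongDual.toWeakDual (f (WeakDual.toStrongDual x))

/-- First topological center of a bounded bilinear map. -/
def arensZ1 (m : X →L[ℂ] Y →L[ℂ] Z) : Set (StrongDual ℂ (StrongDual ℂ X)) :=
  {x'' | IsWeakStarCont fun y'' => arensExt m x'' y''}

/-- Second topological center of a bounded bilinear map. -/
def arensZ2 (m : X →L[ℂ] Y →L[ℂ] Z) : Set (StrongDual ℂ (StrongDual ℂ Y)) :=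
  {y'' | IsWeakStarCont fun x'' => arensExt m.flip y'' x''}

/-- `m` is Arens regular when `m*** = m^{t***t}`. -/
def ArensRegular (m : X →L[ℂ] Y →L[ℂ] Z) : Prop :=
  arensExt m = (arensExt m.flip).flip

/-- `m` is left strongly Arens irregular when `Z₁(m)` is the canonical image of `X`. -/
def LeftStronglyArensIrregular (m : X →L[ℂ] Y →L[ℂ] Z) : Prop :=
  arensZ1 m = Set.range (NormedSpace.inclusionInDoubleDual ℂ X)

/-- `m` is right strongly Arens irregular when `Z₂(m)` is the canonical image of `Y`. -/
def RightStronglyArensIrregular (m : X →L[ℂ] Y →L[ℂ] Z) : Prop :=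
  arensZ2 m = Set.range (NormedSpace.inclusionInDoubleDual ℂ Y)

/-- The adjoint `T* : F* → E*` of a bounded linear map. -/
noncomputable def dualMap' (T : E →L[ℂ] F) : StrongDual ℂ F →L[ℂ] StrongDual ℂ E :=
  (ContinuousLinearMap.compL ℂ E F ℂ).flip T

/-- The second adjoint `T** : E** → F**` of a bounded linear map. -/
noncomputable def bidualMap (T : E →L[ℂ] F) :
    StrongDual ℂ (StrongDual ℂ E) →L[ℂ] StrongDual ℂ (StrongDual ℂ F) :=
  dualMap' (dualMap' T)

/-- A net in `A`: a function from a nonempty directed preorder to `A`. -/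
structure Net (A : Type*) where
  ι : Type
  [pre : Preorder ι]
  [dir : IsDirected ι (· ≤ ·)]
  [ne : Nonempty ι]
  e : ι → A

attribute [instance] Net.pre Net.dir Net.ne

/-- A bounded approximate identity for a (non-unital) Banach algebra. -/
def IsBAI {A : Type*} [NonUnitalNormedRing A] (N : Net A) : Prop :=
  (∃ C : ℝ, ∀ i, ‖N.e i‖ ≤ C) ∧
  (∀ a : A, Tendsto (fun i => N.e i * a) atTop (𝓝 a)) ∧
  (∀ a : A, Tendsto (fun i => a * N.e i) atTop (𝓝 a))

end

/-!
Since `e''` is the weak* limit of `(e_α)`, `⟨π_r***(b'', e''), b'⟩ = b''(φ)` where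
`φ(b) = lim_α b'(b e_α)`. Testing with `b''` the canonical image of `b` shows that `e''` is a right
unit for `B**` exactly when `b e_α → b` weakly for every `b ∈ B`. A weak limit of points of the
subspace `bA` lies in its norm closure, and since `(e_α)` is bounded the set of `b` with
`b e_α → b` in norm is closed and contains `BA`; so the condition says `b e_α → b` in norm for all
`b`. Conversely `b = x a` gives `b e_α = x (a e_α) → b`.

It remains to factor every `b` with `b e_α → b` (Cohen's factorization theorem). Let `B` act on the
`ℓ¹`-unitization `A⁺`. With `t = 1 / (4 (C + 1))`, define units
`u_{n+1} = u_n + t (1 - t)^n (e_{α_n} - 1)`, `u_0 = 1`, choosing `α_n` so far out that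
`‖b u_{n+1}⁻¹ - b u_n⁻¹‖ ≤ 2⁻ⁿ`. Then `u_n` converges to some `a` whose scalar part
`lim (1 - t)^n` vanishes, so `a ∈ A`, and `x = lim b u_n⁻¹` satisfies `b = (b u_n⁻¹) u_n → x a`.
-/

theorem exists_seq_of_forall_exists_succ {α : Type*} {P : ℕ → α → Prop} {R : ℕ → α → α → Prop}
    {x₀ : α} (h₀ : P 0 x₀) (h : ∀ n x, P n x → ∃ y, P (n + 1) y ∧ R n x y) :
    ∃ f : ℕ → α, (∀ n, P n (f n)) ∧ ∀ n, R n (f n) (f (n + 1)) := by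
  choose g hg using h
  let f : ∀ n, {x // P n x} := fun n =>
    Nat.rec ⟨x₀, h₀⟩ (fun n x => ⟨g n x.1 x.2, (hg n x.1 x.2).1⟩) n
  exact ⟨fun n => (f n).1, fun n => (f n).2, fun n => (hg n _ (f n).2).2⟩

theorem mem_closure_of_forall_dual_tendsto {𝕜 E ι : Type*} [RCLike 𝕜] [NormedAddCommGroup E]
    [NormedSpace 𝕜 E] [NormedSpace ℝ E] [IsScalarTower ℝ 𝕜 E] {s : Set E} (hs : Convex ℝ s)
    {l : Filter ι} [l.NeBot] {f : ι → E} {x : E} (hfs : ∀ᶠ i in l, f i ∈ s)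
    (hf : ∀ φ : StrongDual 𝕜 E, Tendsto (fun i => φ (f i)) l (𝓝 (φ x))) :
    x ∈ closure s := by
  have hweak : Tendsto (fun i => toWeakSpace 𝕜 E (f i)) l (𝓝 (toWeakSpace 𝕜 E x)) :=
    (WeakBilin.tendsto_iff_forall_eval_tendsto _
      (separatingDual_iff_injective.mp inferInstance)).mpr hf
  have hmem : toWeakSpace 𝕜 E x ∈ closure (toWeakSpace 𝕜 E '' s) :=
    mem_closure_of_tendsto hweak (hfs.mono fun i hi => Set.mem_image_of_mem _ hi)
  rw [← hs.toWeakSpace_closure 𝕜] at hmem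
  obtain ⟨y, hy, hyx⟩ := hmem
  exact (toWeakSpace 𝕜 E).injective hyx ▸ hy

section UnitPerturbation

variable {R : Type*} [NormedRing R]

theorem Units.val_inv_sub_val_inv (u w : Rˣ) :
    (↑u⁻¹ : R) - ↑w⁻¹ = ↑u⁻¹ * (↑w - ↑u) * ↑w⁻¹ := by
  simp [mul_sub, sub_mul, mul_assoc]

theorem Units.norm_inv_le_two_mul {u w : Rˣ} (h : ‖(↑w - ↑u) * (↑u⁻¹ : R)‖ ≤ 1 / 2) :
    ‖(↑w⁻¹ : R)‖ ≤ 2 * ‖(↑u⁻¹ : R)‖ := by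
  have hw : (↑w⁻¹ : R) = ↑u⁻¹ - ↑w⁻¹ * ((↑w - ↑u) * ↑u⁻¹) := by
    rw [← mul_assoc, ← neg_sub (u : R), mul_neg, neg_mul, ← Units.val_inv_sub_val_inv]
    abel
  have : ‖(↑w⁻¹ : R)‖ ≤ ‖(↑u⁻¹ : R)‖ + ‖(↑w⁻¹ : R)‖ * (1 / 2) :=
    calc ‖(↑w⁻¹ : R)‖ ≤ ‖(↑u⁻¹ : R)‖ + ‖(↑w⁻¹ : R)‖ * ‖(↑w - ↑u) * (↑u⁻¹ : R)‖ := by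
          nth_rw 1 [hw]; exact (norm_sub_le _ _).trans (add_le_add_right (norm_mul_le _ _) _)
      _ ≤ _ := by gcongr
  linarith

theorem Units.exists_val_eq_add_of_norm_mul_inv_lt_one [HasSummableGeomSeries R] (u : Rˣ) {y : R}
    (hy : ‖y * ↑u⁻¹‖ < 1) : ∃ w : Rˣ, (w : R) = u + y :=
  ⟨Units.oneSub (-(y * ↑u⁻¹)) (by rwa [norm_neg]) * u, by simp [add_mul, mul_assoc]⟩

variable {𝕜 B : Type*} [NontriviallyNormedField 𝕜] [NormedSpace 𝕜 R] [NormedAddCommGroup B]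
  [NormedSpace 𝕜 B] (ρ : B →L[𝕜] R →L[𝕜] B)

theorem norm_apply_inv_sub_apply_inv_le (hρ : ∀ x u v, ρ (ρ x u) v = ρ x (u * v)) {M : ℝ}
    (hM0 : 0 ≤ M) (hM : ∀ x u, ‖ρ x u‖ ≤ M * ‖x‖ * ‖u‖) {u w : Rˣ} {y : R} (h : (w : R) = u + y)
    (hy : ‖y * ↑u⁻¹‖ ≤ 1 / 2) (b : B) :
    ‖ρ b ↑w⁻¹ - ρ b ↑u⁻¹‖ ≤ 2 * M * ‖ρ (ρ b ↑u⁻¹) y‖ * ‖(↑u⁻¹ : R)‖ := by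
  have hy' : (↑w - ↑u : R) = y := by rw [h, add_sub_cancel_left]
  have hdiff : ρ b ↑w⁻¹ - ρ b ↑u⁻¹ = -ρ (ρ (ρ b ↑u⁻¹) y) ↑w⁻¹ := by
    rw [hρ, hρ, ← mul_assoc, ← hy', ← Units.val_inv_sub_val_inv, map_sub, neg_sub]
  rw [hdiff, norm_neg]
  calc _ ≤ M * ‖ρ (ρ b ↑u⁻¹) y‖ * ‖(↑w⁻¹ : R)‖ := hM _ _
    _ ≤ M * ‖ρ (ρ b ↑u⁻¹) y‖ * (2 * ‖(↑u⁻¹ : R)‖) := by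
        gcongr; exact Units.norm_inv_le_two_mul (hy' ▸ hy)
    _ = _ := by ring

end UnitPerturbation

section RightAction

variable {𝕜 A B ι : Type*} [NontriviallyNormedField 𝕜] [NonUnitalNormedRing A] [NormedSpace 𝕜 A]
  [NormedAddCommGroup B] [NormedSpace 𝕜 B] (πr : B →L[𝕜] A →L[𝕜] B) {l : Filter ι} {e : ι → A}

theorem tendsto_apply_apply_of_tendsto_mul
    (hmod : ∀ (b : B) (a₁ a₂ : A), πr (πr b a₁) a₂ = πr b (a₁ * a₂))
    (hright : ∀ a, Tendsto (fun i => a * e i) l (𝓝 a)) (x : B) (a : A) :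
    Tendsto (fun i => πr (πr x a) (e i)) l (𝓝 (πr x a)) := by
  simp_rw [hmod]
  exact ((πr x).continuous.tendsto a).comp (hright a)

theorem isClosed_setOf_tendsto_apply_self {C : ℝ} (hC : ∀ i, ‖e i‖ ≤ C) :
    IsClosed {x | Tendsto (fun i => πr x (e i)) l (𝓝 x)} := by
  have hbdd : ∃ C', ∀ i, ‖πr.flip (e i)‖ ≤ C' :=
    ⟨‖πr‖ * C, fun i => (πr.flip.le_opNorm _).trans (by rw [πr.opNorm_flip]; gcongr; exact hC i)⟩
  have hF : Equicontinuous fun i => (πr.flip (e i) : B → B) :=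
    ((NormedSpace.equicontinuous_TFAE fun i => πr.flip (e i)).out 5 1).mp hbdd
  exact hF.isClosed_setOfPred_tendsto continuous_id

end RightAction

section RightActionRCLike

variable {𝕜 A B ι : Type*} [RCLike 𝕜] [NonUnitalNormedRing A] [NormedSpace 𝕜 A]
  [NormedAddCommGroup B] [NormedSpace 𝕜 B] (πr : B →L[𝕜] A →L[𝕜] B) {l : Filter ι} {e : ι → A}

theorem tendsto_apply_of_forall_dual_tendsto [NormedSpace ℝ B] [IsScalarTower ℝ 𝕜 B]
    (hmod : ∀ (b : B) (a₁ a₂ : A), πr (πr b a₁) a₂ = πr b (a₁ * a₂)) {C : ℝ}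
    (hC : ∀ i, ‖e i‖ ≤ C) (hright : ∀ a, Tendsto (fun i => a * e i) l (𝓝 a)) [l.NeBot] {b : B}
    (h : ∀ b' : StrongDual 𝕜 B, Tendsto (fun i => b' (πr b (e i))) l (𝓝 (b' b))) :
    Tendsto (fun i => πr b (e i)) l (𝓝 b) := by
  have hb : b ∈ closure (Set.range (πr b)) :=
    mem_closure_of_forall_dual_tendsto
      ((LinearMap.range (πr b : A →ₗ[𝕜] B)).restrictScalars ℝ).convex
      (Eventually.of_forall fun i => Set.mem_range_self _) h
  refine (isClosed_setOf_tendsto_apply_self πr hC).closure_subset_iff.mpr ?_ hb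
  exact Set.range_subset_iff.mpr (tendsto_apply_apply_of_tendsto_mul πr hmod hright b)

end RightActionRCLike

section Unitization

open WithLp

variable {𝕜 A B : Type*} [NontriviallyNormedField 𝕜] [NonUnitalNormedRing A] [NormedSpace 𝕜 A]
  [IsScalarTower 𝕜 A A] [SMulCommClass 𝕜 A A] [NormedAddCommGroup B] [NormedSpace 𝕜 B]

local notation "𝓤" => WithLp 1 (Unitization 𝕜 A)

variable (𝕜 A) in
noncomputable def WithLp.unitizationProdL : 𝓤 →L[𝕜] 𝕜 × A :=
  LinearMap.mkContinuous
    ((Unitization.linearEquiv 𝕜 𝕜 A).toLinearMap ∘ₗ (WithLp.linearEquiv 1 𝕜 _).toLinearMap) 1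
    fun u => by
      rw [one_mul, unitization_norm_def]
      exact max_le_add_of_nonneg (norm_nonneg _) (norm_nonneg _)

theorem WithLp.unitization_norm_inr_sub_one (a : A) :
    ‖toLp 1 (a : Unitization 𝕜 A) - 1‖ = ‖a‖ + 1 := by
  rw [unitization_norm_def]
  change ‖((a : Unitization 𝕜 A) - 1).fst‖ + ‖((a : Unitization 𝕜 A) - 1).snd‖ = _
  simp [sub_eq_add_neg, add_comm]

theorem WithLp.unitization_norm_inr_sub_one_mul_le (a : A) (z : 𝓤) :
    ‖(toLp 1 (a : Unitization 𝕜 A) - 1) * z‖ ≤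
      ‖(ofLp z).fst‖ * (‖a‖ + 1) + ‖a * (ofLp z).snd - (ofLp z).snd‖ := by
  have hfst : (ofLp ((toLp 1 (a : Unitization 𝕜 A) - 1) * z)).fst = -(ofLp z).fst := by
    change ((a - 1 : Unitization 𝕜 A) * ofLp z).fst = _
    simp [sub_eq_add_neg]
  have hsnd : (ofLp ((toLp 1 (a : Unitization 𝕜 A) - 1) * z)).snd =
      (ofLp z).fst • a + (a * (ofLp z).snd - (ofLp z).snd) := by
    change ((a - 1 : Unitization 𝕜 A) * ofLp z).snd = _
    simp only [sub_eq_add_neg, Unitization.snd_mul, Unitization.toProd_add,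
      Unitization.toProd_neg, Prod.fst_add, Unitization.fst_inr, Prod.fst_neg, Unitization.fst_one,
      zero_add, neg_smul, one_smul, Prod.snd_add, Unitization.snd_inr, Prod.snd_neg,
      Unitization.snd_one, neg_zero, add_zero]
    abel
  rw [unitization_norm_def, hfst, hsnd, norm_neg]
  calc _ ≤ ‖(ofLp z).fst‖ + (‖(ofLp z).fst • a‖ + ‖a * (ofLp z).snd - (ofLp z).snd‖) :=
        add_le_add_right (norm_add_le _ _) _
    _ = _ := by rw [norm_smul]; ring

noncomputable def unitizationAction (πr : B →L[𝕜] A →L[𝕜] B) : B →L[𝕜] 𝓤 →L[𝕜] B :=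
  smulRightL 𝕜 𝓤 B ((ContinuousLinearMap.fst 𝕜 𝕜 A).comp (unitizationProdL 𝕜 A)) +
    ((compL 𝕜 𝓤 A B).flip ((ContinuousLinearMap.snd 𝕜 𝕜 A).comp (unitizationProdL 𝕜 A))).comp πr

variable (πr : B →L[𝕜] A →L[𝕜] B)

theorem unitizationAction_apply (x : B) (u : 𝓤) :
    unitizationAction πr x u = (ofLp u).fst • x + πr x (ofLp u).snd := rfl

-- Instance search does not find the operator norm of `unitizationAction πr` (the two module
-- structures on the unitization agree only after unfolding), hence this explicit bound.
theorem norm_unitizationAction_le (x : B) (u : 𝓤) :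
    ‖unitizationAction πr x u‖ ≤ (‖πr‖ + 1) * ‖x‖ * ‖u‖ := by
  rw [unitizationAction_apply, unitization_norm_def]
  calc _ ≤ ‖(ofLp u).fst‖ * ‖x‖ + ‖πr‖ * ‖x‖ * ‖(ofLp u).snd‖ :=
        (norm_add_le _ _).trans (add_le_add (norm_smul _ _).le (πr.le_opNorm₂ _ _))
    _ ≤ ‖(ofLp u).fst‖ * ‖x‖ + ‖πr‖ * ‖x‖ * ‖(ofLp u).snd‖ +
          (‖πr‖ * ‖x‖ * ‖(ofLp u).fst‖ + ‖x‖ * ‖(ofLp u).snd‖) :=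
        le_add_of_nonneg_right (by positivity)
    _ = _ := by ring

theorem unitizationAction_one (x : B) : unitizationAction πr x 1 = x := by
  change (1 : Unitization 𝕜 A).fst • x + πr x (1 : Unitization 𝕜 A).snd = x
  simp

theorem unitizationAction_inr (x : B) (a : A) :
    unitizationAction πr x (toLp 1 (a : Unitization 𝕜 A)) = πr x a := by
  simp [unitizationAction_apply]

theorem unitizationAction_mul (hmod : ∀ (b : B) (a₁ a₂ : A), πr (πr b a₁) a₂ = πr b (a₁ * a₂))
    (x : B) (u v : 𝓤) :
    unitizationAction πr (unitizationAction πr x u) v = unitizationAction πr x (u * v) := by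
  simp only [unitizationAction_apply, unitization_mul, Unitization.fst_mul, Unitization.snd_mul,
    map_add, map_smul, add_apply, smul_apply, hmod, smul_add, smul_smul]
  abel

theorem tendsto_unitizationAction_apply
    (hmod : ∀ (b : B) (a₁ a₂ : A), πr (πr b a₁) a₂ = πr b (a₁ * a₂))
    {ι : Type*} {l : Filter ι} {e : ι → A} (hright : ∀ a, Tendsto (fun i => a * e i) l (𝓝 a))
    {b : B} (hb : Tendsto (fun i => πr b (e i)) l (𝓝 b)) (z : 𝓤) :
    Tendsto (fun i => πr (unitizationAction πr b z) (e i)) l (𝓝 (unitizationAction πr b z)) := by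
  simp only [unitizationAction_apply, map_add, map_smul, add_apply, smul_apply]
  exact (hb.const_smul _).add (tendsto_apply_apply_of_tendsto_mul πr hmod hright b _)

end Unitization

section Cohen

open WithLp

variable {𝕜 A B ι : Type*} [RCLike 𝕜] [NonUnitalNormedRing A] [NormedSpace 𝕜 A]
  [IsScalarTower 𝕜 A A] [SMulCommClass 𝕜 A A] [CompleteSpace A]
  [NormedAddCommGroup B] [NormedSpace 𝕜 B] (πr : B →L[𝕜] A →L[𝕜] B)
  {l : Filter ι} {e : ι → A} {C : ℝ} {b : B}

local notation "𝓤" => WithLp 1 (Unitization 𝕜 A)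

theorem exists_unit_add_smul_inr_sub_one
    (hmod : ∀ (b : B) (a₁ a₂ : A), πr (πr b a₁) a₂ = πr b (a₁ * a₂)) (hC : ∀ i, ‖e i‖ ≤ C)
    (hleft : ∀ a, Tendsto (fun i => e i * a) l (𝓝 a))
    (hright : ∀ a, Tendsto (fun i => a * e i) l (𝓝 a))
    (hb : Tendsto (fun i => πr b (e i)) l (𝓝 b)) [l.NeBot] (u : 𝓤ˣ) {s : 𝕜} (hs : ‖s‖ ≤ 1)
    (hsu : ‖s * (ofLp (↑u⁻¹ : 𝓤)).fst‖ * (C + 1) ≤ 1 / 4) {ε : ℝ} (hε : 0 < ε) :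
    ∃ i, ∃ w : 𝓤ˣ, (w : 𝓤) = u + s • (toLp 1 (e i : Unitization 𝕜 A) - 1) ∧
      ‖unitizationAction πr b ↑w⁻¹ - unitizationAction πr b ↑u⁻¹‖ ≤ ε := by
  set ρ := unitizationAction πr
  set M := ‖πr‖ + 1
  set z : 𝓤 := ↑u⁻¹
  set x := ρ b z
  set δ := ε / (2 * M * ‖z‖ + 1)
  have hδ : 0 < δ := by positivity
  have hev : ∀ᶠ i in l, ‖e i * (ofLp z).snd - (ofLp z).snd‖ < 1 / 4 ∧ ‖πr x (e i) - x‖ < δ :=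
    ((tendsto_iff_norm_sub_tendsto_zero.mp (hleft _)).eventually (gt_mem_nhds (by norm_num))).and
      ((tendsto_iff_norm_sub_tendsto_zero.mp
        (tendsto_unitizationAction_apply πr hmod hright hb z)).eventually (gt_mem_nhds hδ))
  obtain ⟨i, hleft_i, hx_i⟩ := hev.exists
  set y : 𝓤 := s • (toLp 1 (e i : Unitization 𝕜 A) - 1)
  have hy : ‖y * z‖ ≤ 1 / 2 :=
    calc ‖y * z‖ = ‖s‖ * ‖(toLp 1 (e i : Unitization 𝕜 A) - 1) * z‖ := by
          rw [smul_mul_assoc, norm_smul]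
      _ ≤ ‖s‖ * (‖(ofLp z).fst‖ * (C + 1) + 1 / 4) := by
          gcongr
          refine (WithLp.unitization_norm_inr_sub_one_mul_le _ _).trans ?_
          gcongr
          exact hC i
      _ ≤ ‖s * (ofLp z).fst‖ * (C + 1) + 1 / 4 := by
          rw [norm_mul, mul_add, ← mul_assoc]
          gcongr
          exact mul_le_of_le_one_left (by norm_num) hs
      _ ≤ 1 / 2 := by linarith
  obtain ⟨w, hw⟩ := u.exists_val_eq_add_of_norm_mul_inv_lt_one (hy.trans_lt (by norm_num))
  refine ⟨i, w, hw, (norm_apply_inv_sub_apply_inv_le ρ (unitizationAction_mul πr hmod)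
    (by positivity) (norm_unitizationAction_le πr) hw hy b).trans ?_⟩
  have hxy : ‖ρ x y‖ ≤ δ := by
    rw [map_smul, map_sub, unitizationAction_inr, unitizationAction_one, norm_smul]
    exact (mul_le_of_le_one_left (norm_nonneg _) hs).trans hx_i.le
  have hδε : δ * (2 * M * ‖z‖ + 1) = ε := div_mul_cancel₀ _ (by positivity)
  calc 2 * M * ‖ρ x y‖ * ‖z‖ ≤ 2 * M * δ * ‖z‖ := by gcongr
    _ = ε - δ := by rw [← hδε]; ring
    _ ≤ ε := by linarith

theorem exists_cohen_step
    (hmod : ∀ (b : B) (a₁ a₂ : A), πr (πr b a₁) a₂ = πr b (a₁ * a₂)) (hC : ∀ i, ‖e i‖ ≤ C)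
    (hleft : ∀ a, Tendsto (fun i => e i * a) l (𝓝 a))
    (hright : ∀ a, Tendsto (fun i => a * e i) l (𝓝 a))
    (hb : Tendsto (fun i => πr b (e i)) l (𝓝 b)) [l.NeBot] {t : ℝ} (ht0 : 0 < t) (ht1 : t < 1)
    (htC : t * (C + 1) ≤ 1 / 4) (n : ℕ) (u : 𝓤ˣ) (hu : (ofLp (u : 𝓤)).fst = ((1 - t : ℝ) : 𝕜) ^ n) :
    ∃ w : 𝓤ˣ, (ofLp (w : 𝓤)).fst = ((1 - t : ℝ) : 𝕜) ^ (n + 1) ∧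
      ‖(w : 𝓤) - u‖ ≤ (C + 1) * t * (1 - t) ^ n ∧
      ‖unitizationAction πr b ↑w⁻¹ - unitizationAction πr b ↑u⁻¹‖ ≤ (1 / 2) ^ n := by
  have hc0 : 0 < 1 - t := by linarith
  set s : 𝕜 := ((t * (1 - t) ^ n : ℝ) : 𝕜) with hs_def
  have hs : ‖s‖ = t * (1 - t) ^ n := by
    rw [RCLike.norm_ofReal, abs_of_nonneg (by positivity)]
  have hs1 : ‖s‖ ≤ 1 := hs ▸ mul_le_one₀ ht1.le (by positivity) (pow_le_one₀ hc0.le (by linarith))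
  have hu_inv : (ofLp (↑u⁻¹ : 𝓤)).fst = (((1 - t : ℝ) : 𝕜) ^ n)⁻¹ := by
    rw [← hu]
    exact map_units_inv ((Unitization.fstHom 𝕜 A).comp (unitizationAlgEquiv 𝕜).toAlgHom) u
  have hsu : s * (ofLp (↑u⁻¹ : 𝓤)).fst = t := by
    have : ((1 - t : ℝ) : 𝕜) ≠ 0 := RCLike.ofReal_ne_zero.mpr hc0.ne'
    rw [hu_inv, hs_def, RCLike.ofReal_mul, RCLike.ofReal_pow, mul_assoc,
      mul_inv_cancel₀ (pow_ne_zero _ this), mul_one]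
  obtain ⟨i, w, hw, hdiff⟩ := exists_unit_add_smul_inr_sub_one πr hmod hC hleft hright hb u hs1
    (by rw [hsu, RCLike.norm_ofReal, abs_of_pos ht0]; exact htC) (ε := (1 / 2) ^ n) (by positivity)
  refine ⟨w, ?_, ?_, hdiff⟩
  · rw [hw]
    change (ofLp (u : 𝓤)).fst + (s • ((e i : Unitization 𝕜 A) - 1)).fst = _
    simp only [hu, sub_eq_add_neg, map_add, map_one, map_neg, map_mul, map_pow, smul_add,
      smul_neg, Unitization.toProd_add, Unitization.toProd_smul, Unitization.toProd_neg,
      Prod.fst_add, Prod.smul_fst, Unitization.fst_inr, smul_eq_mul, mul_zero, Prod.fst_neg,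
      Unitization.fst_one, mul_one, zero_add, s]
    ring
  · rw [hw, add_sub_cancel_left, norm_smul, unitization_norm_inr_sub_one, hs]
    calc t * (1 - t) ^ n * (‖e i‖ + 1) ≤ t * (1 - t) ^ n * (C + 1) := by gcongr; exact hC i
      _ = _ := by ring

theorem cohen_factorization [CompleteSpace B]
    (hmod : ∀ (b : B) (a₁ a₂ : A), πr (πr b a₁) a₂ = πr b (a₁ * a₂)) (hC : ∀ i, ‖e i‖ ≤ C)
    (hleft : ∀ a, Tendsto (fun i => e i * a) l (𝓝 a))
    (hright : ∀ a, Tendsto (fun i => a * e i) l (𝓝 a))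
    (hb : Tendsto (fun i => πr b (e i)) l (𝓝 b)) [l.NeBot] :
    ∃ (x : B) (a : A), b = πr x a := by
  have hC0 : 0 ≤ C := (norm_nonneg _).trans (hC (nonempty_of_neBot l).some)
  set t : ℝ := 1 / (4 * (C + 1)) with ht_def
  have ht0 : 0 < t := by positivity
  have htC : t * (C + 1) = 1 / 4 := by rw [ht_def]; field_simp
  have ht1 : t < 1 := by nlinarith
  obtain ⟨u, hu_fst, hu_succ⟩ := exists_seq_of_forall_exists_succ
    (P := fun n (u : 𝓤ˣ) => (ofLp (u : 𝓤)).fst = ((1 - t : ℝ) : 𝕜) ^ n) (x₀ := 1)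
    (by rw [pow_zero]; exact Unitization.fst_one)
    (fun n u hu => exists_cohen_step πr hmod hC hleft hright hb ht0 ht1 htC.le n u hu)
  have hu_cauchy : CauchySeq fun n => (u n : 𝓤) :=
    cauchySeq_of_le_geometric (1 - t) ((C + 1) * t) (by linarith) fun n => by
      rw [dist_comm, dist_eq_norm]; exact (hu_succ n).1
  have hx_cauchy : CauchySeq fun n => unitizationAction πr b ↑(u n)⁻¹ :=
    cauchySeq_of_le_geometric (1 / 2) 1 (by norm_num) fun n => by
      rw [dist_comm, dist_eq_norm, one_mul]; exact (hu_succ n).2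
  obtain ⟨v, hv⟩ := cauchySeq_tendsto_of_complete hu_cauchy
  obtain ⟨x, hx⟩ := cauchySeq_tendsto_of_complete hx_cauchy
  have hv_fst : (ofLp v).fst = 0 := by
    refine tendsto_nhds_unique (((unitizationProdL 𝕜 A).continuous.fst.tendsto v).comp hv) ?_
    refine (tendsto_pow_atTop_nhds_zero_of_norm_lt_one ?_).congr fun n => (hu_fst n).symm
    rw [RCLike.norm_ofReal, abs_of_pos (by linarith)]
    linarith
  have hv_eq : v = toLp 1 ((ofLp v).snd : Unitization 𝕜 A) :=
    WithLp.ofLp_injective 1 (Unitization.ext (by simp [hv_fst]) (by simp))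
  have hcont : Continuous fun p : B × 𝓤 => unitizationAction πr p.1 p.2 :=
    (unitizationAction πr).continuous₂
  refine ⟨x, (ofLp v).snd, ?_⟩
  rw [← unitizationAction_inr, ← hv_eq]
  refine tendsto_nhds_unique tendsto_const_nhds
    (((hcont.tendsto (x, v)).comp (hx.prodMk_nhds hv)).congr fun n => ?_)
  simp only [Function.comp_apply]
  rw [unitizationAction_mul πr hmod, Units.inv_mul, unitizationAction_one]

end Cohen

section Arens

variable {X Y Z : Type*} [NormedAddCommGroup X] [NormedSpace ℂ X] [NormedAddCommGroup Y]
  [NormedSpace ℂ Y] [NormedAddCommGroup Z] [NormedSpace ℂ Z]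

theorem arensExt_apply_eq_self_iff (m : X →L[ℂ] Y →L[ℂ] X) (y'' : StrongDual ℂ (StrongDual ℂ Y)) :
    (∀ x'', arensExt m x'' y'' = x'') ↔ ∀ x' x, arensAdj (arensAdj m) y'' x' x = x' x := by
  refine ⟨fun h x' x => ?_, fun h x'' => ?_⟩
  · exact congr($(h (inclusionInDoubleDual ℂ X x)) x')
  · ext x'
    exact congr(x'' $(ContinuousLinearMap.ext (h x')))

theorem tendsto_arensAdj_arensAdj_apply {ι : Type*} {l : Filter ι} (m : X →L[ℂ] Y →L[ℂ] Z)
    {y : ι → Y} {y'' : StrongDual ℂ (StrongDual ℂ Y)}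
    (hlim : ∀ y' : StrongDual ℂ Y, Tendsto (fun i => y' (y i)) l (𝓝 (y'' y')))
    (z' : StrongDual ℂ Z) (x : X) :
    Tendsto (fun i => z' (m x (y i))) l (𝓝 (arensAdj (arensAdj m) y'' z' x)) :=
  hlim (arensAdj m z' x)

end Arens

theorem stmt_13_general {A B : Type*} [NonUnitalNormedRing A] [NormedSpace ℂ A] [IsScalarTower ℂ A A] [SMulCommClass ℂ A A] [CompleteSpace A] [NormedAddCommGroup B] [NormedSpace ℂ B] [CompleteSpace B]
    (πr : B →L[ℂ] A →L[ℂ] B)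
    (hmod : ∀ (b : B) (a₁ a₂ : A), πr (πr b a₁) a₂ = πr b (a₁ * a₂))
    (e'' : StrongDual ℂ (StrongDual ℂ A))
    (N : Net A) (hN : IsBAI N)
    (hlim : ∀ a' : StrongDual ℂ A, Tendsto (fun i => a' (N.e i)) atTop (𝓝 (e'' a'))) :
    (∀ b : B, ∃ (x : B) (a : A), b = πr x a) ↔
      (∀ b'' : StrongDual ℂ (StrongDual ℂ B), arensExt πr b'' e'' = b'') := by
  obtain ⟨⟨C, hC⟩, hleft, hright⟩ := hN
  rw [arensExt_apply_eq_self_iff]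
  constructor
  · intro hfac b' b
    obtain ⟨x, a, rfl⟩ := hfac b
    exact tendsto_nhds_unique (tendsto_arensAdj_arensAdj_apply πr hlim b' _)
      ((b'.continuous.tendsto _).comp (tendsto_apply_apply_of_tendsto_mul πr hmod hright x a))
  · intro h b
    refine cohen_factorization πr hmod hC hleft hright
      (tendsto_apply_of_forall_dual_tendsto πr hmod hC hright fun b' => ?_)
    simpa only [h] using tendsto_arensAdj_arensAdj_apply πr hlim b' b

/-- If `e'' ∈ A**` is a right unit for the first Arens product which is
the weak* limit of a BAI of `A`, then `B = BA` iff `π_r***(b'',e'') = b''` for all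
`b'' ∈ B**`. -/
theorem stmt_13 {A B : Type*} [NonUnitalNormedRing A] [NormedSpace ℂ A] [IsScalarTower ℂ A A] [SMulCommClass ℂ A A] [CompleteSpace A] [NormedAddCommGroup B] [NormedSpace ℂ B] [CompleteSpace B]
    (πr : B →L[ℂ] A →L[ℂ] B)
    (hmod : ∀ (b : B) (a₁ a₂ : A), πr (πr b a₁) a₂ = πr b (a₁ * a₂))
    (e'' : StrongDual ℂ (StrongDual ℂ A))
    (hunit : ∀ a'' : StrongDual ℂ (StrongDual ℂ A), arensExt (ContinuousLinearMap.mul ℂ A) a'' e'' = a'')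
    (N : Net A) (hN : IsBAI N)
    (hlim : ∀ a' : StrongDual ℂ A, Tendsto (fun i => a' (N.e i)) atTop (𝓝 (e'' a'))) :
    (∀ b : B, ∃ (x : B) (a : A), b = πr x a) ↔
      (∀ b'' : StrongDual ℂ (StrongDual ℂ B), arensExt πr b'' e'' = b'') :=
  stmt_13_general πr hmod e'' N hN hlim
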